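/- (Theorem 3) Let α, β ∈ ℂ with α ≠ 0 and β ≠ 0, let 𝔻 be a two-mode displacement operator with parameters (−α/2, −β/2), and let φ ∈ ℓ²(ℕ×ℕ, ℂ) with ‖φ‖ = 1 satisfy: (i) Ω₁ φ = φ; (ii) Ω₂ φ = φ; (iii) (𝔻 φ)(n,m) = 0 for all (n,m) with n+m even (i.e. φ is fixed by the displaced odd-parity projection 𝔻⁻¹ ∘ P_odd ∘ 𝔻). Then there exists c ∈ ℂ with |c| = 1 such that φ = c • ψ^{ECS(−)}_{α,β}, where ψ^{ECS(−)}_{α,β} = (2(1 − exp(−(|α|²+|β|²)/2)))^{−1/2} • (coh α ⊠ coh 0 − coh 0 ⊠ coh β). -/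

import Mathlib

open scoped ComplexConjugate ENNReal

/-- The components of the coherent state `|α⟩`: `exp(−|α|²/2)·αⁿ/√(n!)`. -/
noncomputable def cohFun (α : ℂ) : ℕ → ℂ := fun n =>
  (Real.exp (-‖α‖ ^ 2 / 2) / Real.sqrt (Nat.factorial n) : ℝ) * α ^ n

lemma cohFun_memℓp (α : ℂ) : Memℓp (cohFun α) 2 := by
  apply memℓp_gen
  have h : Summable (fun n : ℕ =>
      Real.exp (-‖α‖ ^ 2 / 2) ^ 2 * ((‖α‖ ^ 2) ^ n / (Nat.factorial n))) :=
    (Real.summable_pow_div_factorial (‖α‖ ^ 2)).mul_left _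
  refine h.congr fun n => ?_
  have h2 : ((2 : ℝ≥0∞).toReal) = (2 : ℝ) := by norm_num
  rw [h2, Real.rpow_two]
  have hn : ‖cohFun α n‖ = Real.exp (-‖α‖ ^ 2 / 2) / Real.sqrt (Nat.factorial n) * ‖α‖ ^ n := by
    simp only [cohFun, norm_mul, norm_pow, Complex.norm_real, Real.norm_eq_abs]
    rw [abs_of_pos (by positivity)]
  rw [hn, mul_pow, div_pow, Real.sq_sqrt (by positivity), pow_right_comm]
  ring

/-- The coherent state `|α⟩` as an element of `ℓ²(ℕ, ℂ)`. -/
noncomputable def coh (α : ℂ) : lp (fun _ : ℕ => ℂ) 2 := ⟨cohFun α, cohFun_memℓp α⟩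

/-- The product state `ψ ⊠ χ` in the two-mode space `ℓ²(ℕ×ℕ, ℂ)`,
with components `(ψ ⊠ χ)(n, m) = ψ n · χ m`. -/
noncomputable def tmul (ψ χ : lp (fun _ : ℕ => ℂ) 2) : lp (fun _ : ℕ × ℕ => ℂ) 2 :=
  ⟨fun q => ψ q.1 * χ q.2, by
    apply memℓp_gen
    have hψ := (lp.memℓp ψ).summable (p := 2) (by norm_num)
    have hχ := (lp.memℓp χ).summable (p := 2) (by norm_num)
    refine (hψ.mul_of_nonneg hχ (fun n => Real.rpow_nonneg (norm_nonneg _) _)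
      (fun n => Real.rpow_nonneg (norm_nonneg _) _)).congr fun q => ?_
    rw [norm_mul, Real.mul_rpow (norm_nonneg _) (norm_nonneg _)]⟩

/-- A two-mode displacement operator with parameters `(γ, δ)`: a linear isometric
equivalence of `ℓ²(ℕ×ℕ, ℂ)` acting on product coherent states in the prescribed way. -/
def IsTwoModeDisplacement
    (𝔻 : lp (fun _ : ℕ × ℕ => ℂ) 2 ≃ₗᵢ[ℂ] lp (fun _ : ℕ × ℕ => ℂ) 2) (γ δ : ℂ) : Prop :=
  ∀ β β' : ℂ, 𝔻 (tmul (coh β) (coh β')) =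
    Complex.exp ((γ * conj β - conj γ * β) / 2 + (δ * conj β' - conj δ * β') / 2) •
      tmul (coh (γ + β)) (coh (δ + β'))

/-!
Being fixed by `Ω₂` means `φ (n, m) = a n * coh β m + coh α n * b m` for some sequences `a`, `b`,
and being fixed by `Ω₁` kills every entry with `n, m ≥ 1`. Since coherent amplitudes of a nonzero
parameter never vanish, this forces `a` and `b` to be proportional to `coh α` and `coh β` away
from index `0`, so `φ = μ • |α⟩|0⟩ + ν • |0⟩|β⟩`. The displacement sends these two product states,
with trivial phase, to `|α/2⟩|-β/2⟩` and `|-α/2⟩|β/2⟩`, which have the same nonzero vacuum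
amplitude; the parity condition at `(0, 0)` therefore gives `ν = -μ`, and normalisation fixes `|μ|`.
-/

lemma coh_apply (γ : ℂ) (n : ℕ) :
    coh γ n = (Real.exp (-‖γ‖ ^ 2 / 2) / Real.sqrt (Nat.factorial n) : ℝ) * γ ^ n := rfl

lemma coh_apply_zero (γ : ℂ) : coh γ 0 = Real.exp (-‖γ‖ ^ 2 / 2) := by
  simp [coh_apply]

lemma coh_zero_apply (n : ℕ) : coh 0 n = if n = 0 then 1 else 0 := by
  cases n <;> simp [coh_apply]

lemma coh_apply_ne_zero {γ : ℂ} (hγ : γ ≠ 0) (n : ℕ) : coh γ n ≠ 0 := by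
  have : 0 < Real.exp (-‖γ‖ ^ 2 / 2) / Real.sqrt (Nat.factorial n) := by positivity
  exact mul_ne_zero (Complex.ofReal_ne_zero.mpr this.ne') (pow_ne_zero _ hγ)

lemma tmul_apply (ψ χ : lp (fun _ : ℕ => ℂ) 2) (n m : ℕ) : tmul ψ χ (n, m) = ψ n * χ m := rfl

lemma inner_coh_coh (α β : ℂ) :
    inner ℂ (coh α) (coh β) = Complex.exp (-(‖α‖ ^ 2 + ‖β‖ ^ 2) / 2 + conj α * β) := by
  have hterm (n : ℕ) : inner ℂ (coh α n) (coh β n)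
      = Complex.exp (-(‖α‖ ^ 2 + ‖β‖ ^ 2) / 2) * ((conj α * β) ^ n / n.factorial) := by
    have hreal : Real.exp (-‖α‖ ^ 2 / 2) / √n.factorial * (Real.exp (-‖β‖ ^ 2 / 2) / √n.factorial)
        = Real.exp (-(‖α‖ ^ 2 + ‖β‖ ^ 2) / 2) / n.factorial := by
      rw [div_mul_div_comm, Real.mul_self_sqrt (by positivity), ← Real.exp_add]
      ring_nf
    rw [RCLike.inner_apply, coh_apply, coh_apply, map_mul, Complex.conj_ofReal, map_pow]
    calc _ = ((Real.exp (-‖α‖ ^ 2 / 2) / √n.factorial * (Real.exp (-‖β‖ ^ 2 / 2) / √n.factorial)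
          : ℝ) : ℂ) * (conj α * β) ^ n := by push_cast; ring
      _ = _ := by rw [hreal]; push_cast; ring
  rw [lp.inner_eq_tsum, tsum_congr hterm, tsum_mul_left, Complex.exp_add,
    Complex.exp_eq_exp_ℂ, NormedSpace.exp_eq_tsum_div]

lemma norm_coh (γ : ℂ) : ‖coh γ‖ = 1 := by
  have h : inner ℂ (coh γ) (coh γ) = 1 := by
    rw [inner_coh_coh, Complex.conj_mul', ← Complex.exp_zero]
    congr 1
    ring
  rw [← sq_eq_sq₀ (norm_nonneg _) zero_le_one, @norm_sq_eq_re_inner ℂ, h]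
  simp

lemma lp.summable_norm_inner {ι 𝕜 : Type*} [RCLike 𝕜] {G : ι → Type*}
    [∀ i, NormedAddCommGroup (G i)] [∀ i, InnerProductSpace 𝕜 (G i)] (f g : lp G 2) :
    Summable fun i => ‖inner 𝕜 (f i) (g i)‖ :=
  .of_nonneg_of_le (fun _ => norm_nonneg _) (fun i => norm_inner_le_norm (f i) (g i))
    (lp.summable_mul (by rw [Real.holderConjugate_iff]; norm_num) f g)

lemma inner_tmul_tmul (ψ χ ψ' χ' : lp (fun _ : ℕ => ℂ) 2) :
    inner ℂ (tmul ψ χ) (tmul ψ' χ') = inner ℂ ψ ψ' * inner ℂ χ χ' := by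
  rw [lp.inner_eq_tsum, lp.inner_eq_tsum, lp.inner_eq_tsum,
    tsum_mul_tsum_of_summable_norm (lp.summable_norm_inner (𝕜 := ℂ) ψ ψ')
      (lp.summable_norm_inner (𝕜 := ℂ) χ χ')]
  refine tsum_congr fun q => ?_
  simp only [RCLike.inner_apply, tmul, map_mul]
  ring

lemma norm_tmul (ψ χ : lp (fun _ : ℕ => ℂ) 2) : ‖tmul ψ χ‖ = ‖ψ‖ * ‖χ‖ := by
  have h := inner_tmul_tmul ψ χ ψ χ
  simp only [inner_self_eq_norm_sq_to_K, ← mul_pow] at h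
  exact (pow_left_inj₀ (norm_nonneg _) (by positivity) two_ne_zero).mp (by exact_mod_cast h)

lemma norm_tmul_coh_sub_tmul_coh (α β : ℂ) :
    ‖tmul (coh α) (coh 0) - tmul (coh 0) (coh β)‖
      = Real.sqrt (2 * (1 - Real.exp (-(‖α‖ ^ 2 + ‖β‖ ^ 2) / 2))) := by
  have hcross : inner ℂ (tmul (coh α) (coh 0)) (tmul (coh 0) (coh β))
      = (Real.exp (-(‖α‖ ^ 2 + ‖β‖ ^ 2) / 2) : ℂ) := by
    rw [inner_tmul_tmul, inner_coh_coh, inner_coh_coh, ← Complex.exp_add]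
    simp only [norm_zero, map_zero, zero_mul, mul_zero, Complex.ofReal_exp]
    push_cast
    ring_nf
  rw [← Real.sqrt_sq (norm_nonneg _), @norm_sub_sq ℂ, hcross, norm_tmul, norm_tmul,
    norm_coh, norm_coh, norm_coh, RCLike.re_to_complex, Complex.ofReal_re]
  ring_nf

lemma exists_eq_of_eq_zero_off_axes {K : Type*} [Field K] {u v a b : ℕ → K}
    (hu : u 1 ≠ 0) (hv : v 1 ≠ 0) (h : ∀ n m, n ≠ 0 → m ≠ 0 → a n * v m + u n * b m = 0) :
    ∃ μ ν : K, ∀ n m, a n * v m + u n * b m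
      = μ * (u n * if m = 0 then 1 else 0) + ν * ((if n = 0 then 1 else 0) * v m) := by
  have ha (n : ℕ) (hn : n ≠ 0) : a n = a 1 / u 1 * u n := by
    rw [div_mul_eq_mul_div, eq_div_iff hu]
    refine mul_right_cancel₀ hv ?_
    linear_combination u 1 * h n 1 hn one_ne_zero - u n * h 1 1 one_ne_zero one_ne_zero
  have hb (m : ℕ) (hm : m ≠ 0) : b m = -(a 1 / u 1 * v m) := by
    rw [div_mul_eq_mul_div, ← neg_div, eq_div_iff hu]
    linear_combination h 1 m one_ne_zero hm
  refine ⟨a 1 / u 1 * v 0 + b 0, a 0 - a 1 / u 1 * u 0, fun n m => ?_⟩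
  rcases eq_or_ne n 0 with rfl | hn <;> rcases eq_or_ne m 0 with rfl | hm
  · simp only [if_true, mul_one, one_mul]; ring
  · simp only [if_true, if_neg hm, hb m hm]; ring
  · simp only [if_true, if_neg hn, ha n hn]; ring
  · simp only [if_neg hn, if_neg hm, h n m hn hm]; ring

lemma exists_eq_smul_tmul_add_smul_tmul {α β : ℂ} (hα : α ≠ 0) (hβ : β ≠ 0)
    {φ : lp (fun _ : ℕ × ℕ => ℂ) 2} {a b : ℕ → ℂ}
    (hab : ∀ n m, φ (n, m) = a n * coh β m + coh α n * b m)
    (hzero : ∀ n m, n ≠ 0 → m ≠ 0 → φ (n, m) = 0) :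
    ∃ μ ν : ℂ, φ = μ • tmul (coh α) (coh 0) + ν • tmul (coh 0) (coh β) := by
  obtain ⟨μ, ν, h⟩ := exists_eq_of_eq_zero_off_axes (coh_apply_ne_zero hα 1)
    (coh_apply_ne_zero hβ 1) fun n m hn hm => (hab n m).symm.trans (hzero n m hn hm)
  refine ⟨μ, ν, lp.ext (funext fun ⟨n, m⟩ => ?_)⟩
  simp only [lp.coeFn_add, lp.coeFn_smul, Pi.add_apply, Pi.smul_apply, smul_eq_mul, tmul_apply,
    coh_zero_apply]
  rw [hab, h]

section Displacement

variable {𝔻 : lp (fun _ : ℕ × ℕ => ℂ) 2 ≃ₗᵢ[ℂ] lp (fun _ : ℕ × ℕ => ℂ) 2}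

lemma IsTwoModeDisplacement.map_tmul_coh_coh_zero {α δ : ℂ}
    (h𝔻 : IsTwoModeDisplacement 𝔻 (-α / 2) δ) :
    𝔻 (tmul (coh α) (coh 0)) = tmul (coh (α / 2)) (coh δ) := by
  have hphase : (-α / 2 * conj α - conj (-α / 2) * α) / 2 + (δ * conj 0 - conj δ * 0) / 2 = 0 := by
    simp only [map_div₀, map_neg, map_ofNat, map_zero, mul_zero]
    ring
  rw [h𝔻, hphase, Complex.exp_zero, one_smul, add_zero]
  congr 2
  ring

lemma IsTwoModeDisplacement.map_tmul_coh_zero_coh {γ β : ℂ}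
    (h𝔻 : IsTwoModeDisplacement 𝔻 γ (-β / 2)) :
    𝔻 (tmul (coh 0) (coh β)) = tmul (coh γ) (coh (β / 2)) := by
  have hphase : (γ * conj 0 - conj γ * 0) / 2 + (-β / 2 * conj β - conj (-β / 2) * β) / 2 = 0 := by
    simp only [map_div₀, map_neg, map_ofNat, map_zero, mul_zero]
    ring
  rw [h𝔻, hphase, Complex.exp_zero, one_smul, add_zero]
  congr 2
  ring

lemma IsTwoModeDisplacement.add_eq_zero_of_apply_zero_zero {α β μ ν : ℂ}
    (h𝔻 : IsTwoModeDisplacement 𝔻 (-α / 2) (-β / 2))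
    (h : 𝔻 (μ • tmul (coh α) (coh 0) + ν • tmul (coh 0) (coh β)) (0, 0) = 0) :
    μ + ν = 0 := by
  rw [map_add, map_smul, map_smul, h𝔻.map_tmul_coh_coh_zero, h𝔻.map_tmul_coh_zero_coh] at h
  simp only [lp.coeFn_add, lp.coeFn_smul, Pi.add_apply, Pi.smul_apply, smul_eq_mul, tmul_apply,
    coh_apply_zero, norm_div, norm_neg] at h
  have hvac : (Real.exp (-(‖α‖ / ‖(2 : ℂ)‖) ^ 2 / 2) * Real.exp (-(‖β‖ / ‖(2 : ℂ)‖) ^ 2 / 2) : ℂ)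
      ≠ 0 := by
    simp [Complex.exp_ne_zero]
  exact (mul_eq_zero.mp (by linear_combination h)).resolve_right hvac

end Displacement

lemma exists_norm_eq_one_smul_inv_norm_smul {𝕜 E : Type*} [RCLike 𝕜] [NormedAddCommGroup E]
    [NormedSpace 𝕜 E] {x v : E} {μ : 𝕜} (hx : x = μ • v) (h : ‖x‖ = 1) :
    ∃ c : 𝕜, ‖c‖ = 1 ∧ x = c • ((‖v‖ : 𝕜)⁻¹ • v) := by
  have hv : (‖v‖ : 𝕜) ≠ 0 := by
    rintro hv
    rw [hx, norm_smul, RCLike.ofReal_eq_zero.mp hv, mul_zero] at h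
    exact zero_ne_one h
  refine ⟨μ * ‖v‖, ?_, ?_⟩
  · rw [norm_mul, RCLike.norm_ofReal, abs_norm, ← norm_smul, ← hx, h]
  · rw [hx, smul_smul, mul_assoc, mul_inv_cancel₀ hv, mul_one]

/-- Theorem 3: a unit vector passing `Ω₁`, `Ω₂` and the displaced
odd-parity projection equals `ψ^{ECS(−)}_{α,β}` up to a phase. -/
theorem ecs_minus_verification (α β : ℂ) (hα : α ≠ 0) (hβ : β ≠ 0)
    (𝔻 : lp (fun _ : ℕ × ℕ => ℂ) 2 ≃ₗᵢ[ℂ] lp (fun _ : ℕ × ℕ => ℂ) 2)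
    (h𝔻 : IsTwoModeDisplacement 𝔻 (-α / 2) (-β / 2))
    (Ω₁ Ω₂ : lp (fun _ : ℕ × ℕ => ℂ) 2 →L[ℂ] lp (fun _ : ℕ × ℕ => ℂ) 2)
    (hΩ₁ : ∀ (φ : lp (fun _ : ℕ × ℕ => ℂ) 2) (n m : ℕ),
      (Ω₁ φ) (n, m) = if n = 0 ∨ m = 0 then φ (n, m) else 0)
    (hΩ₂ : ∀ (φ : lp (fun _ : ℕ × ℕ => ℂ) 2) (n m : ℕ),
      (Ω₂ φ) (n, m)
        = coh β m * (∑' k : ℕ, conj (coh β k) * φ (n, k))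
        + coh α n * (∑' k : ℕ, conj (coh α k) * φ (k, m))
        - coh α n * coh β m * (∑' k : ℕ, ∑' l : ℕ, conj (coh α k) * conj (coh β l) * φ (k, l)))
    (φ : lp (fun _ : ℕ × ℕ => ℂ) 2) (hnorm : ‖φ‖ = 1)
    (h1 : Ω₁ φ = φ) (h2 : Ω₂ φ = φ)
    (h3 : ∀ n m : ℕ, Even (n + m) → (𝔻 φ) (n, m) = 0) :
    ∃ c : ℂ, ‖c‖ = 1 ∧
      φ = c • (((Real.sqrt (2 * (1 - Real.exp (-(‖α‖ ^ 2 + ‖β‖ ^ 2) / 2))))⁻¹ : ℂ) •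
        (tmul (coh α) (coh 0) - tmul (coh 0) (coh β))) := by
  have hab (n m : ℕ) : φ (n, m) = (∑' k : ℕ, conj (coh β k) * φ (n, k)) * coh β m
      + coh α n * ((∑' k : ℕ, conj (coh α k) * φ (k, m))
        - (∑' k : ℕ, ∑' l : ℕ, conj (coh α k) * conj (coh β l) * φ (k, l)) * coh β m) := by
    have h := hΩ₂ φ n m
    rw [h2] at h
    linear_combination h
  have hzero (n m : ℕ) (hn : n ≠ 0) (hm : m ≠ 0) : φ (n, m) = 0 := by
    simpa [h1, hn, hm] using hΩ₁ φ n m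
  obtain ⟨μ, ν, rfl⟩ := exists_eq_smul_tmul_add_smul_tmul hα hβ hab hzero
  have hν : ν = -μ :=
    eq_neg_of_add_eq_zero_right (h𝔻.add_eq_zero_of_apply_zero_zero (h3 0 0 ⟨0, rfl⟩))
  rw [hν, neg_smul, ← sub_eq_add_neg, ← smul_sub] at hnorm ⊢
  rw [← norm_tmul_coh_sub_tmul_coh]
  exact exists_norm_eq_one_smul_inv_norm_smul rfl hnorm
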